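/- Let p be a positive integer, Ω₀ a p×p real symmetric positive definite matrix all of whose eigenvalues lie in [1/M, M] for some M ≥ 1, Σ₀ = Ω₀⁻¹, and s ∈ ℝ^p with nonnegative entries such that Σ₀ − (1/2)diag(s) is positive semidefinite and Λmin(2diag(s) − diag(s)Ω₀diag(s)) ≥ c₀ > 0. For a symmetric positive definite Ω with 2diag(s) − diag(s)Ωdiag(s) positive semidefinite and S ⊆ {1,…,p} with B_{0,S}ᵀB_{0,S} positive definite, define the (p+|S|)×(p+|S|) block matrix H^Ω(S) = [[I_p, C^Ω_S − C_{0,S}·B̃(Ω,S)], [0, B̃(Ω,S)]]. Then there exist constants δ > 0 and C > 0 depending only on M and c₀ such that for every K ≥ 1, every S ⊆ {1,…,p} with |S| ≤ K, and every symmetric positive definite Ω with ‖Ω − Ω₀‖₂ ≤ δ, one has ‖H^Ω(S) − I_{p+|S|}‖_F ≤ C·√K·‖Ω − Ω₀‖₂. In particular, since H^{Ω₀}(S) = I_{p+|S|}, the bound ‖H^Ω(S) − H^{Ω₀}(S)‖_F ≤ C√K·‖Ω − Ω₀‖₂ holds uniformly over such Ω and S. -/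

import Mathlib

open Matrix Finset
open scoped Classical BigOperators Matrix.Norms.L2Operator

noncomputable section

/-- Spectral norm (ℓ2 operator norm) of a real matrix. -/
def specNorm {m n : Type*} [Fintype m] [Fintype n] [DecidableEq n]
    (A : Matrix m n ℝ) : ℝ :=
  ‖LinearMap.toContinuousLinearMap (Matrix.toEuclideanLin A)‖

/-- Frobenius norm of a real matrix. -/
def frobNorm {m n : Type*} [Fintype m] [Fintype n] (A : Matrix m n ℝ) : ℝ :=
  Real.sqrt (∑ i, ∑ j, (A i j) ^ 2)

/-- Smallest eigenvalue (Rayleigh quotient inf) of a real symmetric matrix. -/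
def lambdaMin {n : Type*} [Fintype n] (A : Matrix n n ℝ) : ℝ :=
  sInf {r | ∃ x : n → ℝ, ∑ i, (x i) ^ 2 = 1 ∧ r = x ⬝ᵥ A.mulVec x}

/-- Largest eigenvalue (Rayleigh quotient sup) of a real symmetric matrix. -/
def lambdaMax {n : Type*} [Fintype n] (A : Matrix n n ℝ) : ℝ :=
  sSup {r | ∃ x : n → ℝ, ∑ i, (x i) ^ 2 = 1 ∧ r = x ⬝ᵥ A.mulVec x}

/-- Positive semidefinite square root (0 if the matrix is not psd). -/
def msqrt {n : Type*} [Fintype n] [DecidableEq n] (A : Matrix n n ℝ) : Matrix n n ℝ :=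
  if h : A.PosSemidef then
    (h.1.eigenvectorUnitary : Matrix n n ℝ) * diagonal ((↑) ∘ (√·) ∘ h.1.eigenvalues) *
      (star h.1.eigenvectorUnitary : Matrix n n ℝ)
  else 0

/-- Column submatrix with columns in `S`. -/
def colSub {m p : Type*} (A : Matrix m p ℝ) (S : Finset p) : Matrix m {j // j ∈ S} ℝ :=
  A.submatrix id (fun j => (j : p))

/-- `B^Ω`, the psd square root of `2 diag(s) - diag(s) Ω diag(s)`. -/
def Bmat {p : ℕ} (s : Fin p → ℝ) (Om : Matrix (Fin p) (Fin p) ℝ) :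
    Matrix (Fin p) (Fin p) ℝ :=
  msqrt ((2 : ℝ) • Matrix.diagonal s - Matrix.diagonal s * Om * Matrix.diagonal s)

/-- `C^Ω = I - Ω diag(s)`. -/
def Cmat {p : ℕ} (s : Fin p → ℝ) (Om : Matrix (Fin p) (Fin p) ℝ) :
    Matrix (Fin p) (Fin p) ℝ :=
  1 - Om * Matrix.diagonal s

/-- `B̃(Ω, S) = (B₀ₛᵀ B₀ₛ)^{-1/2} ((B^Ω_S)ᵀ B^Ω_S)^{1/2}`. -/
def Btilde {p : ℕ} (s : Fin p → ℝ) (Om₀ Om : Matrix (Fin p) (Fin p) ℝ)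
    (S : Finset (Fin p)) : Matrix {j // j ∈ S} {j // j ∈ S} ℝ :=
  (msqrt ((colSub (Bmat s Om₀) S)ᵀ * colSub (Bmat s Om₀) S))⁻¹ *
    msqrt ((colSub (Bmat s Om) S)ᵀ * colSub (Bmat s Om) S)

/-- The block matrix `H^Ω(S) = [[I, C^Ω_S − C₀ₛ B̃(Ω,S)], [0, B̃(Ω,S)]]`. -/
def Hmat {p : ℕ} (s : Fin p → ℝ) (Om₀ Om : Matrix (Fin p) (Fin p) ℝ)
    (S : Finset (Fin p)) :
    Matrix (Fin p ⊕ {j // j ∈ S}) (Fin p ⊕ {j // j ∈ S}) ℝ :=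
  Matrix.fromBlocks 1
    (colSub (Cmat s Om) S - colSub (Cmat s Om₀) S * Btilde s Om₀ Om S)
    0 (Btilde s Om₀ Om S)

open scoped Matrix.Norms.L2Operator in
lemma specNorm_eq_norm {m n : Type*} [Fintype m] [Fintype n] [DecidableEq n]
    (A : Matrix m n ℝ) : specNorm A = ‖A‖ := rfl

def sqn {n : Type*} [Fintype n] (x : n → ℝ) : ℝ := ∑ i, (x i)^2

lemma sqn_nonneg {n : Type*} [Fintype n] (x : n → ℝ) : 0 ≤ sqn x :=
  Finset.sum_nonneg fun i _ => sq_nonneg _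

lemma norm_eu {n : Type*} [Fintype n] (x : n → ℝ) :
    ‖(WithLp.equiv 2 (n → ℝ)).symm x‖ = Real.sqrt (sqn x) := by
  rw [EuclideanSpace.norm_eq]; simp [sqn, Real.norm_eq_abs, sq_abs]

lemma sqn_eq_sq_norm {n : Type*} [Fintype n] (x : n → ℝ) :
    sqn x = ‖(WithLp.equiv 2 (n → ℝ)).symm x‖ ^ 2 := by
  rw [norm_eu, Real.sq_sqrt (sqn_nonneg x)]

lemma clm_apply {m n : Type*} [Fintype m] [Fintype n] [DecidableEq n]
    (A : Matrix m n ℝ) (x : n → ℝ) :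
    (LinearMap.toContinuousLinearMap (Matrix.toEuclideanLin A)) ((WithLp.equiv 2 (n → ℝ)).symm x)
      = (WithLp.equiv 2 (m → ℝ)).symm (A *ᵥ x) := by
  simp [Matrix.toEuclideanLin_toLp]

lemma sqn_mulVec_le {m n : Type*} [Fintype m] [Fintype n] [DecidableEq n]
    (A : Matrix m n ℝ) (x : n → ℝ) : sqn (A *ᵥ x) ≤ ‖A‖^2 * sqn x := by
  have h := (LinearMap.toContinuousLinearMap (Matrix.toEuclideanLin A)).le_opNorm
    ((WithLp.equiv 2 (n → ℝ)).symm x)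
  rw [clm_apply] at h
  have h2 : ‖(WithLp.equiv 2 (m → ℝ)).symm (A *ᵥ x)‖ ^ 2 ≤
      (‖A‖ * ‖(WithLp.equiv 2 (n → ℝ)).symm x‖) ^ 2 := by
    apply pow_le_pow_left₀ (norm_nonneg _) h
  rw [← sqn_eq_sq_norm] at h2
  calc sqn (A *ᵥ x) ≤ (‖A‖ * ‖(WithLp.equiv 2 (n → ℝ)).symm x‖) ^ 2 := h2
    _ = ‖A‖^2 * sqn x := by rw [mul_pow, ← sqn_eq_sq_norm]

lemma norm_le_of_sqn {m n : Type*} [Fintype m] [Fintype n] [DecidableEq n]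
    (A : Matrix m n ℝ) {c : ℝ} (hc : 0 ≤ c)
    (h : ∀ x, sqn (A *ᵥ x) ≤ c^2 * sqn x) : ‖A‖ ≤ c := by
  apply ContinuousLinearMap.opNorm_le_bound _ hc
  intro y
  have hy : y = (WithLp.equiv 2 (n → ℝ)).symm (WithLp.equiv 2 (n → ℝ) y) := rfl
  simp only [LinearEquiv.trans_apply]
  rw [hy, clm_apply, norm_eu, norm_eu]
  set x := WithLp.equiv 2 (n → ℝ) y
  have := h x
  calc Real.sqrt (sqn (A *ᵥ x)) ≤ Real.sqrt (c^2 * sqn x) := Real.sqrt_le_sqrt (h x)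
    _ = c * Real.sqrt (sqn x) := by
        rw [Real.sqrt_mul (sq_nonneg c), Real.sqrt_sq hc]

lemma abs_dot_le {n : Type*} [Fintype n] (x y : n → ℝ) :
    |x ⬝ᵥ y| ≤ Real.sqrt (sqn x) * Real.sqrt (sqn y) := by
  have h := Finset.sum_mul_sq_le_sq_mul_sq Finset.univ x y
  have h2 : |x ⬝ᵥ y|^2 ≤ (Real.sqrt (sqn x) * Real.sqrt (sqn y))^2 := by
    rw [mul_pow, Real.sq_sqrt (sqn_nonneg x), Real.sq_sqrt (sqn_nonneg y), sq_abs]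
    exact h
  have h3 := Real.sqrt_le_sqrt h2
  rwa [Real.sqrt_sq (abs_nonneg _), Real.sqrt_sq (mul_nonneg (Real.sqrt_nonneg _) (Real.sqrt_nonneg _))] at h3


lemma abs_quad_le {m n : Type*} [Fintype m] [Fintype n] [DecidableEq n]
    (A : Matrix m n ℝ) (x : m → ℝ) (y : n → ℝ) :
    |x ⬝ᵥ A *ᵥ y| ≤ ‖A‖ * Real.sqrt (sqn x) * Real.sqrt (sqn y) := by
  calc |x ⬝ᵥ A *ᵥ y| ≤ Real.sqrt (sqn x) * Real.sqrt (sqn (A *ᵥ y)) := abs_dot_le _ _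
    _ ≤ Real.sqrt (sqn x) * (‖A‖ * Real.sqrt (sqn y)) := by
        apply mul_le_mul_of_nonneg_left _ (Real.sqrt_nonneg _)
        calc Real.sqrt (sqn (A *ᵥ y)) ≤ Real.sqrt (‖A‖^2 * sqn y) :=
              Real.sqrt_le_sqrt (sqn_mulVec_le A y)
          _ = ‖A‖ * Real.sqrt (sqn y) := by
              rw [Real.sqrt_mul (sq_nonneg _), Real.sqrt_sq (norm_nonneg _)]
    _ = ‖A‖ * Real.sqrt (sqn x) * Real.sqrt (sqn y) := by ring

section Eigen
variable {n : Type*} [Fintype n] [DecidableEq n] {A : Matrix n n ℝ}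

lemma herm_of_symm (h : Aᵀ = A) : A.IsHermitian := by
  have h2 : Aᴴ = Aᵀ := by
    ext i j
    simp [Matrix.conjTranspose_apply]
  unfold Matrix.IsHermitian
  rw [h2, h]

lemma quad_nonneg_of_psd (h : A.PosSemidef) (x : n → ℝ) : 0 ≤ x ⬝ᵥ A *ᵥ x := by
  simpa using h.dotProduct_mulVec_nonneg x

lemma psd_of_quad (h1 : A.IsHermitian) (h2 : ∀ x, 0 ≤ x ⬝ᵥ A *ᵥ x) : A.PosSemidef :=
  .of_dotProduct_mulVec_nonneg h1 fun x => by simpa using h2 x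

lemma dot_symm_shift (h : Aᵀ = A) (x y : n → ℝ) :
    x ⬝ᵥ A *ᵥ y = (A *ᵥ x) ⬝ᵥ y := by
  rw [Matrix.dotProduct_mulVec, ← Matrix.mulVec_transpose, h]

lemma dot_self_eq_sqn' (x : n → ℝ) : x ⬝ᵥ x = sqn x := by
  simp [dotProduct, sqn, sq]

lemma quad_smul_one (c : ℝ) (x : n → ℝ) : x ⬝ᵥ (c • (1 : Matrix n n ℝ)) *ᵥ x = c * sqn x := by
  have h : (c • (1 : Matrix n n ℝ)) *ᵥ x = c • x := by
    rw [Matrix.smul_mulVec, Matrix.one_mulVec]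
  rw [h, dotProduct_smul, smul_eq_mul, dot_self_eq_sqn']

-- spectral decomposition over ℝ
lemma spectral_real (hA : A.IsHermitian) :
    A = (hA.eigenvectorUnitary : Matrix n n ℝ) * Matrix.diagonal hA.eigenvalues *
      star (hA.eigenvectorUnitary : Matrix n n ℝ) := by
  have := hA.spectral_theorem
  simpa using this

lemma U_mul_star (hA : A.IsHermitian) :
    (hA.eigenvectorUnitary : Matrix n n ℝ) * star (hA.eigenvectorUnitary : Matrix n n ℝ) = 1 :=
  Matrix.mem_unitaryGroup_iff.mp hA.eigenvectorUnitary.2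

lemma star_mul_U (hA : A.IsHermitian) :
    star (hA.eigenvectorUnitary : Matrix n n ℝ) * (hA.eigenvectorUnitary : Matrix n n ℝ) = 1 :=
  Matrix.mem_unitaryGroup_iff'.mp hA.eigenvectorUnitary.2

lemma conj_diag_psd (hA : A.IsHermitian) {g : n → ℝ} (hg : ∀ i, 0 ≤ g i) :
    ((hA.eigenvectorUnitary : Matrix n n ℝ) * Matrix.diagonal g *
      star (hA.eigenvectorUnitary : Matrix n n ℝ)).PosSemidef := by
  rw [Matrix.star_eq_conjTranspose]
  exact (Matrix.posSemidef_diagonal_iff.mpr hg).mul_mul_conjTranspose_same _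

lemma conj_diag_mul (hA : A.IsHermitian) (g h : n → ℝ) :
    ((hA.eigenvectorUnitary : Matrix n n ℝ) * Matrix.diagonal g *
        star (hA.eigenvectorUnitary : Matrix n n ℝ)) *
      ((hA.eigenvectorUnitary : Matrix n n ℝ) * Matrix.diagonal h *
        star (hA.eigenvectorUnitary : Matrix n n ℝ)) =
    (hA.eigenvectorUnitary : Matrix n n ℝ) * Matrix.diagonal (g * h) *
      star (hA.eigenvectorUnitary : Matrix n n ℝ) := by
  have hd : Matrix.diagonal (g * h) = Matrix.diagonal g * Matrix.diagonal h :=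
    (Matrix.diagonal_mul_diagonal g h).symm
  rw [hd]
  set U := (hA.eigenvectorUnitary : Matrix n n ℝ)
  calc U * Matrix.diagonal g * star U * (U * Matrix.diagonal h * star U)
      = U * Matrix.diagonal g * (star U * U) * Matrix.diagonal h * star U := by
        noncomm_ring
    _ = U * (Matrix.diagonal g * Matrix.diagonal h) * star U := by
        rw [star_mul_U hA]; noncomm_ring

lemma conj_diag_sub (hA : A.IsHermitian) (g h : n → ℝ) :
    ((hA.eigenvectorUnitary : Matrix n n ℝ) * Matrix.diagonal g *
        star (hA.eigenvectorUnitary : Matrix n n ℝ)) -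
      ((hA.eigenvectorUnitary : Matrix n n ℝ) * Matrix.diagonal h *
        star (hA.eigenvectorUnitary : Matrix n n ℝ)) =
    (hA.eigenvectorUnitary : Matrix n n ℝ) * Matrix.diagonal (g - h) *
      star (hA.eigenvectorUnitary : Matrix n n ℝ) := by
  have hd : Matrix.diagonal (g - h) = Matrix.diagonal g - Matrix.diagonal h := by
    ext i j
    by_cases hij : i = j <;> simp [Matrix.diagonal, hij]
  rw [hd]
  noncomm_ring

lemma conj_const (hA : A.IsHermitian) (c : ℝ) :
    c • (1 : Matrix n n ℝ) =
    (hA.eigenvectorUnitary : Matrix n n ℝ) * Matrix.diagonal (fun _ => c) *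
      star (hA.eigenvectorUnitary : Matrix n n ℝ) := by
  have : (Matrix.diagonal (fun _ : n => c)) = c • (1 : Matrix n n ℝ) := by
    ext i j
    by_cases hij : i = j <;> simp [Matrix.diagonal, Matrix.one_apply, hij]
  rw [this]
  set U := (hA.eigenvectorUnitary : Matrix n n ℝ)
  calc c • (1 : Matrix n n ℝ) = c • (U * star U) := by rw [U_mul_star hA]
    _ = U * (c • (1:Matrix n n ℝ)) * star U := by
        rw [Matrix.mul_smul, Matrix.smul_mul, mul_one]

lemma sqn_basis (hA : A.IsHermitian) (i : n) : sqn ⇑(hA.eigenvectorBasis i) = 1 := by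
  have h1 : ‖hA.eigenvectorBasis i‖ = 1 := hA.eigenvectorBasis.orthonormal.1 i
  have : sqn ⇑(hA.eigenvectorBasis i) = ‖hA.eigenvectorBasis i‖ ^ 2 := sqn_eq_sq_norm _
  rw [this, h1, one_pow]

lemma dot_self_eq_sqn (x : n → ℝ) : x ⬝ᵥ x = sqn x := by
  simp [dotProduct, sqn, sq]

lemma eigen_ge (hA : A.IsHermitian) {c : ℝ} (h : ∀ x, c * sqn x ≤ x ⬝ᵥ A *ᵥ x) (i : n) :
    c ≤ hA.eigenvalues i := by
  have hv := hA.mulVec_eigenvectorBasis i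
  have h1 := h ⇑(hA.eigenvectorBasis i)
  rw [hv, sqn_basis hA i, mul_one] at h1
  rwa [dotProduct_smul, smul_eq_mul, dot_self_eq_sqn, sqn_basis hA i, mul_one] at h1

lemma eigen_le (hA : A.IsHermitian) {c : ℝ} (h : ∀ x, x ⬝ᵥ A *ᵥ x ≤ c * sqn x) (i : n) :
    hA.eigenvalues i ≤ c := by
  have hv := hA.mulVec_eigenvectorBasis i
  have h1 := h ⇑(hA.eigenvectorBasis i)
  rw [hv, sqn_basis hA i, mul_one] at h1
  rwa [dotProduct_smul, smul_eq_mul, dot_self_eq_sqn, sqn_basis hA i, mul_one] at h1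

end Eigen

section Derived
variable {n : Type*} [Fintype n] [DecidableEq n] {A : Matrix n n ℝ}

lemma sqn_eq_zero_iff {x : n → ℝ} : sqn x = 0 ↔ x = 0 := by
  constructor
  · intro h
    funext i
    have := (Finset.sum_eq_zero_iff_of_nonneg (fun i _ => sq_nonneg (x i))).mp h i (Finset.mem_univ i)
    exact (pow_eq_zero_iff (by norm_num : (2:ℕ) ≠ 0)).mp this
  · rintro rfl; simp [sqn]

lemma sqn_smul (c : ℝ) (x : n → ℝ) : sqn (c • x) = c^2 * sqn x := by
  simp [sqn, Finset.mul_sum, mul_pow]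

lemma quad_smul (c : ℝ) (x : n → ℝ) : (c • x) ⬝ᵥ A *ᵥ (c • x) = c^2 * (x ⬝ᵥ A *ᵥ x) := by
  rw [Matrix.mulVec_smul, smul_dotProduct, dotProduct_smul]
  simp [smul_eq_mul]; ring

lemma quad_ge_of_unit {c : ℝ} (h : ∀ x : n → ℝ, sqn x = 1 → c ≤ x ⬝ᵥ A *ᵥ x) :
    ∀ x, c * sqn x ≤ x ⬝ᵥ A *ᵥ x := by
  intro x
  by_cases hx : sqn x = 0
  · rw [hx, mul_zero, sqn_eq_zero_iff.mp hx]
    simp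
  · have hpos : 0 < sqn x := lt_of_le_of_ne (sqn_nonneg x) (Ne.symm hx)
    set t := Real.sqrt (sqn x) with ht
    have htpos : 0 < t := Real.sqrt_pos.mpr hpos
    have ht2 : t^2 = sqn x := Real.sq_sqrt (sqn_nonneg x)
    have hu : sqn (t⁻¹ • x) = 1 := by
      rw [sqn_smul, ← ht2]; field_simp
    have := h _ hu
    rw [quad_smul] at this
    have h2 : c * t^2 ≤ (t⁻¹)^2 * (x ⬝ᵥ A *ᵥ x) * t^2 := by
      nlinarith [sq_nonneg t]
    rw [← ht2]
    calc c * t^2 ≤ (t⁻¹)^2 * (x ⬝ᵥ A *ᵥ x) * t^2 := h2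
      _ = x ⬝ᵥ A *ᵥ x := by field_simp

lemma quad_le_of_unit {c : ℝ} (h : ∀ x : n → ℝ, sqn x = 1 → x ⬝ᵥ A *ᵥ x ≤ c) :
    ∀ x, x ⬝ᵥ A *ᵥ x ≤ c * sqn x := by
  intro x
  have h' : ∀ x : n → ℝ, sqn x = 1 → -c ≤ x ⬝ᵥ (-A) *ᵥ x := by
    intro x hx
    have := h x hx
    simp only [Matrix.neg_mulVec, dotProduct_neg]
    linarith
  have := quad_ge_of_unit h' x
  simp only [Matrix.neg_mulVec, dotProduct_neg] at this
  linarith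

lemma rayleigh_ge_of_le_lambdaMin {c : ℝ} (h : c ≤ lambdaMin A) :
    ∀ x : n → ℝ, c * sqn x ≤ x ⬝ᵥ A *ᵥ x := by
  apply quad_ge_of_unit
  intro x hx
  have hbdd : BddBelow {r | ∃ x : n → ℝ, ∑ i, (x i) ^ 2 = 1 ∧ r = x ⬝ᵥ A.mulVec x} := by
    refine ⟨-‖A‖, ?_⟩
    rintro r ⟨y, hy1, rfl⟩
    have := abs_quad_le A y y
    have hy : sqn y = 1 := hy1
    rw [hy, Real.sqrt_one, mul_one, mul_one] at this
    have := neg_le_of_abs_le this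
    linarith [this]
  have hmem : (x ⬝ᵥ A.mulVec x) ∈ {r | ∃ x : n → ℝ, ∑ i, (x i) ^ 2 = 1 ∧ r = x ⬝ᵥ A.mulVec x} :=
    ⟨x, hx, rfl⟩
  exact h.trans (csInf_le hbdd hmem)

lemma rayleigh_le_of_lambdaMax_le {c : ℝ} (h : lambdaMax A ≤ c) :
    ∀ x : n → ℝ, x ⬝ᵥ A *ᵥ x ≤ c * sqn x := by
  apply quad_le_of_unit
  intro x hx
  have hbdd : BddAbove {r | ∃ x : n → ℝ, ∑ i, (x i) ^ 2 = 1 ∧ r = x ⬝ᵥ A.mulVec x} := by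
    refine ⟨‖A‖, ?_⟩
    rintro r ⟨y, hy1, rfl⟩
    have := abs_quad_le A y y
    have hy : sqn y = 1 := hy1
    rw [hy, Real.sqrt_one, mul_one, mul_one] at this
    exact le_of_abs_le this
  have hmem : (x ⬝ᵥ A.mulVec x) ∈ {r | ∃ x : n → ℝ, ∑ i, (x i) ^ 2 = 1 ∧ r = x ⬝ᵥ A.mulVec x} :=
    ⟨x, hx, rfl⟩
  exact (le_csSup hbdd hmem).trans h

lemma symm_of_herm (h : A.IsHermitian) : Aᵀ = A := by
  have h2 : Aᴴ = Aᵀ := by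
    ext i j
    simp [Matrix.conjTranspose_apply]
  rw [← h2, h.eq]

lemma quad_sub (B : Matrix n n ℝ) (x : n → ℝ) :
    x ⬝ᵥ (A - B) *ᵥ x = x ⬝ᵥ A *ᵥ x - x ⬝ᵥ B *ᵥ x := by
  rw [Matrix.sub_mulVec, dotProduct_sub]

lemma norm_le_of_abs_eigen (hs : Aᵀ = A) {c : ℝ} (hc : 0 ≤ c)
    (hb : ∀ i, |(herm_of_symm hs).eigenvalues i| ≤ c) : ‖A‖ ≤ c := by
  set hA := herm_of_symm hs
  have hsq : A * A = (hA.eigenvectorUnitary : Matrix n n ℝ) *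
      Matrix.diagonal (hA.eigenvalues * hA.eigenvalues) *
      star (hA.eigenvectorUnitary : Matrix n n ℝ) := by
    conv_lhs => rw [spectral_real hA]
    exact conj_diag_mul hA _ _
  have hpsd : ((c^2) • (1 : Matrix n n ℝ) - A * A).PosSemidef := by
    rw [hsq, conj_const hA (c^2), conj_diag_sub hA]
    apply conj_diag_psd hA
    intro i
    have := hb i
    have h2 : (hA.eigenvalues i)^2 ≤ c^2 := by
      rw [← sq_abs]
      exact pow_le_pow_left₀ (abs_nonneg _) this 2
    simp [Pi.sub_apply, Pi.mul_apply]
    nlinarith [h2]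
  apply norm_le_of_sqn A hc
  intro x
  have h0 := quad_nonneg_of_psd hpsd x
  rw [quad_sub, quad_smul_one] at h0
  have hq : x ⬝ᵥ (A * A) *ᵥ x = sqn (A *ᵥ x) := by
    rw [← Matrix.mulVec_mulVec, dot_symm_shift hs, dot_self_eq_sqn]
  linarith [h0, hq ▸ h0]

lemma msqrt_spectral (h : A.PosSemidef) :
    msqrt A = (h.1.eigenvectorUnitary : Matrix n n ℝ) *
      Matrix.diagonal (fun i => Real.sqrt (h.1.eigenvalues i)) *
      star (h.1.eigenvectorUnitary : Matrix n n ℝ) := by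
  rw [msqrt, dif_pos h]
  rfl

lemma msqrt_psd (h : A.PosSemidef) : (msqrt A).PosSemidef := by
  rw [msqrt_spectral h]; exact conj_diag_psd h.1 (fun i => Real.sqrt_nonneg _)

lemma msqrt_mul_self (h : A.PosSemidef) : msqrt A * msqrt A = A := by
  rw [msqrt_spectral h, conj_diag_mul h.1]
  conv_rhs => rw [spectral_real h.1]
  congr 3
  funext i
  simp [Real.mul_self_sqrt (h.eigenvalues_nonneg i)]

lemma quad_msqrt_ge (hA : A.PosSemidef) {m : ℝ} (hm : 0 ≤ m)
    (h : ∀ x, m * sqn x ≤ x ⬝ᵥ A *ᵥ x) :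
    ∀ x, Real.sqrt m * sqn x ≤ x ⬝ᵥ (msqrt A) *ᵥ x := by
  have heig : ∀ i, m ≤ hA.1.eigenvalues i := eigen_ge hA.1 h
  have hpsd : (msqrt A - Real.sqrt m • (1 : Matrix n n ℝ)).PosSemidef := by
    rw [msqrt_spectral hA, conj_const hA.1 (Real.sqrt m), conj_diag_sub hA.1]
    apply conj_diag_psd hA.1
    intro i
    simp only [Pi.sub_apply]
    have := Real.sqrt_le_sqrt (heig i)
    linarith
  intro x
  have h0 := quad_nonneg_of_psd hpsd x
  rw [quad_sub, quad_smul_one] at h0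
  linarith

end Derived

section Derived2
variable {n : Type*} [Fintype n] [DecidableEq n] {A : Matrix n n ℝ}

lemma posdef_of_quad (hs : Aᵀ = A) {m : ℝ} (hm : 0 < m)
    (h : ∀ x, m * sqn x ≤ x ⬝ᵥ A *ᵥ x) : A.PosDef := by
  refine Matrix.PosDef.of_dotProduct_mulVec_pos (herm_of_symm hs) fun x hx => ?_
  have hsq : 0 < sqn x := by
    rcases lt_or_eq_of_le (sqn_nonneg x) with h' | h'
    · exact h'
    · exact absurd (sqn_eq_zero_iff.mp h'.symm) hx
  have := h x
  have : 0 < x ⬝ᵥ A *ᵥ x := lt_of_lt_of_le (by positivity) this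
  simpa using this

lemma pd_mul_inv_eq_one (hA : A.PosDef) : A * A⁻¹ = 1 :=
  Matrix.mul_nonsing_inv A (isUnit_iff_ne_zero.mpr hA.det_pos.ne')

lemma norm_inv_le (hs : Aᵀ = A) {m : ℝ} (hm : 0 < m)
    (h : ∀ x, m * sqn x ≤ x ⬝ᵥ A *ᵥ x) : ‖A⁻¹‖ ≤ 1 / m := by
  have hpd := posdef_of_quad hs hm h
  apply norm_le_of_sqn _ (by positivity)
  intro y
  set x := A⁻¹ *ᵥ y with hxdef
  have hAx : A *ᵥ x = y := by
    rw [hxdef, Matrix.mulVec_mulVec, pd_mul_inv_eq_one hpd, Matrix.one_mulVec]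
  by_cases hx0 : sqn x = 0
  · rw [hx0]
    have := sqn_nonneg y
    positivity
  · have hxpos : 0 < sqn x := lt_of_le_of_ne (sqn_nonneg x) (Ne.symm hx0)
    have h1 : m * sqn x ≤ x ⬝ᵥ y := by
      rw [← hAx]; exact h x
    have h2 : x ⬝ᵥ y ≤ Real.sqrt (sqn x) * Real.sqrt (sqn y) :=
      (le_abs_self _).trans (abs_dot_le x y)
    have h3 : m * sqn x ≤ Real.sqrt (sqn x) * Real.sqrt (sqn y) := h1.trans h2
    have hsx : Real.sqrt (sqn x) ^ 2 = sqn x := Real.sq_sqrt (sqn_nonneg x)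
    have hsxpos : 0 < Real.sqrt (sqn x) := Real.sqrt_pos.mpr hxpos
    have h4 : m * Real.sqrt (sqn x) ≤ Real.sqrt (sqn y) := by
      have := h3
      rw [← hsx] at this
      nlinarith
    have h5 : (m * Real.sqrt (sqn x))^2 ≤ Real.sqrt (sqn y)^2 := by
      apply pow_le_pow_left₀ (by positivity) h4
    rw [Real.sq_sqrt (sqn_nonneg y), mul_pow, hsx] at h5
    calc sqn x ≤ sqn y / m^2 := by
          rw [le_div_iff₀ (by positivity)]; linarith
      _ = (1/m)^2 * sqn y := by field_simp
end Derived2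

section SqrtLip
variable {n : Type*} [Fintype n] [DecidableEq n]

lemma sqrt_lip {P Q : Matrix n n ℝ} (hP : P.PosSemidef) (hQ : Q.PosSemidef)
    {a b : ℝ} (ha : 0 ≤ a) (hb : 0 ≤ b) (hab : 0 < a + b)
    (h1 : ∀ x, a * sqn x ≤ x ⬝ᵥ (msqrt P) *ᵥ x)
    (h2 : ∀ x, b * sqn x ≤ x ⬝ᵥ (msqrt Q) *ᵥ x) :
    ‖msqrt P - msqrt Q‖ ≤ ‖P - Q‖ / (a + b) := by
  set X := msqrt P - msqrt Q with hXdef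
  have hXh : X.IsHermitian := (msqrt_psd hP).1.sub (msqrt_psd hQ).1
  have hXs : Xᵀ = X := symm_of_herm hXh
  have hdecomp : P - Q = msqrt P * X + X * msqrt Q := by
    rw [hXdef, Matrix.mul_sub, Matrix.sub_mul, msqrt_mul_self hP, msqrt_mul_self hQ]
    noncomm_ring
  have key : ∀ i, |hXh.eigenvalues i| ≤ ‖P - Q‖ / (a + b) := by
    intro i
    set μ := hXh.eigenvalues i with hμ
    set v := ⇑(hXh.eigenvectorBasis i) with hv
    have hXv : X *ᵥ v = μ • v := hXh.mulVec_eigenvectorBasis i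
    have hsv : sqn v = 1 := sqn_basis hXh i
    set qP := v ⬝ᵥ (msqrt P) *ᵥ v with hqP
    set qQ := v ⬝ᵥ (msqrt Q) *ᵥ v with hqQ
    have hqPa : a ≤ qP := by have := h1 v; rwa [hsv, mul_one] at this
    have hqQb : b ≤ qQ := by have := h2 v; rwa [hsv, mul_one] at this
    have e1 : v ⬝ᵥ (msqrt P * X) *ᵥ v = μ * qP := by
      rw [← Matrix.mulVec_mulVec, hXv, Matrix.mulVec_smul, dotProduct_smul, smul_eq_mul, hqP]
    have e2 : v ⬝ᵥ (X * msqrt Q) *ᵥ v = μ * qQ := by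
      rw [← Matrix.mulVec_mulVec, dot_symm_shift hXs, hXv, smul_dotProduct, smul_eq_mul, hqQ]
    have e3 : v ⬝ᵥ (P - Q) *ᵥ v = μ * (qP + qQ) := by
      rw [hdecomp, Matrix.add_mulVec, dotProduct_add, e1, e2]; ring
    have e4 : |v ⬝ᵥ (P - Q) *ᵥ v| ≤ ‖P - Q‖ := by
      have := abs_quad_le (P - Q) v v
      rwa [hsv, Real.sqrt_one, mul_one, mul_one] at this
    have e5 : |μ| * (a + b) ≤ ‖P - Q‖ := by
      have hq : a + b ≤ qP + qQ := add_le_add hqPa hqQb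
      have : |μ| * (a + b) ≤ |μ| * (qP + qQ) :=
        mul_le_mul_of_nonneg_left hq (abs_nonneg μ)
      have h6 : |μ| * (qP + qQ) = |μ * (qP + qQ)| := by
        rw [abs_mul, abs_of_nonneg (le_trans hab.le hq)]
      calc |μ| * (a + b) ≤ |μ| * (qP + qQ) := this
        _ = |μ * (qP + qQ)| := h6
        _ = |v ⬝ᵥ (P - Q) *ᵥ v| := by rw [e3]
        _ ≤ ‖P - Q‖ := e4
    rw [le_div_iff₀ hab]
    exact e5
  exact norm_le_of_abs_eigen hXs (by positivity) key

end SqrtLip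

section Diag
variable {n : Type*} [Fintype n] [DecidableEq n]

lemma norm_diagonal_le {d : n → ℝ} {c : ℝ} (hc : 0 ≤ c) (h : ∀ i, |d i| ≤ c) :
    ‖Matrix.diagonal d‖ ≤ c := by
  apply norm_le_of_sqn _ hc
  intro x
  have : ∀ i, ((Matrix.diagonal d *ᵥ x) i)^2 = (d i)^2 * (x i)^2 := by
    intro i
    rw [Matrix.mulVec_diagonal]
    ring
  unfold sqn
  calc ∑ i, ((Matrix.diagonal d *ᵥ x) i)^2 = ∑ i, (d i)^2 * (x i)^2 := by
        simp_rw [this]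
    _ ≤ ∑ i, c^2 * (x i)^2 := by
        apply Finset.sum_le_sum
        intro i _
        apply mul_le_mul_of_nonneg_right _ (sq_nonneg _)
        rw [← sq_abs]
        exact pow_le_pow_left₀ (abs_nonneg _) (h i) 2
    _ = c^2 * ∑ i, (x i)^2 := by rw [Finset.mul_sum]

end Diag

section Submatrix
variable {n n' m m' : Type*} [Fintype n] [Fintype n'] [Fintype m] [Fintype m']
  [DecidableEq n] [DecidableEq n']

lemma sum_range_eq {f : n' → n} (hf : Function.Injective f) (g : n → ℝ)
    (hz : ∀ j, (∀ j', f j' ≠ j) → g j = 0) : ∑ j, g j = ∑ j', g (f j') := by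
  rw [← Finset.sum_image (fun a _ b _ h => hf h)]
  apply (Finset.sum_subset (Finset.subset_univ _) _).symm
  intro j _ hj
  apply hz
  intro j' hj'
  exact hj (Finset.mem_image.mpr ⟨j', Finset.mem_univ _, hj'⟩)

lemma ext_apply {f : n' → n} (hf : Function.Injective f) (x : n' → ℝ) (j' : n') :
    Function.extend f x 0 (f j') = x j' := hf.extend_apply x 0 j'

lemma ext_apply_zero {f : n' → n} (x : n' → ℝ) {j : n} (hj : ∀ j', f j' ≠ j) :
    Function.extend f x 0 j = 0 := by
  have hne : ¬∃ a, f a = j := by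
    rintro ⟨a, ha⟩
    exact hj a ha
  rw [Function.extend_apply' x (0 : n → ℝ) j hne]
  rfl

lemma sqn_ext {f : n' → n} (hf : Function.Injective f) (x : n' → ℝ) :
    sqn (Function.extend f x 0) = sqn x := by
  unfold sqn
  rw [sum_range_eq hf (fun j => (Function.extend f x 0 j)^2)]
  · apply Finset.sum_congr rfl
    intro j' _
    rw [ext_apply hf]
  · intro j hj
    rw [ext_apply_zero x hj]
    norm_num

lemma mulVec_submatrix {f : n' → n} (hf : Function.Injective f) (A : Matrix m n ℝ)
    (e : m' → m) (x : n' → ℝ) (i' : m') :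
    (A.submatrix e f *ᵥ x) i' = (A *ᵥ Function.extend f x 0) (e i') := by
  show ∑ j', A (e i') (f j') * x j' = ∑ j, A (e i') j * Function.extend f x 0 j
  rw [sum_range_eq hf (fun j => A (e i') j * Function.extend f x 0 j)]
  · apply Finset.sum_congr rfl
    intro j' _
    rw [ext_apply hf]
  · intro j hj
    rw [ext_apply_zero x hj, mul_zero]

lemma norm_submatrix_le {f : n' → n} {e : m' → m} (he : Function.Injective e)
    (hf : Function.Injective f) (A : Matrix m n ℝ) :
    ‖A.submatrix e f‖ ≤ ‖A‖ := by
  apply norm_le_of_sqn _ (norm_nonneg A)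
  intro x
  have h1 : sqn (A.submatrix e f *ᵥ x) = ∑ i', ((A *ᵥ Function.extend f x 0) (e i'))^2 := by
    unfold sqn
    apply Finset.sum_congr rfl
    intro i' _
    rw [mulVec_submatrix hf]
  rw [h1]
  have h2 : ∑ i', ((A *ᵥ Function.extend f x 0) (e i'))^2 ≤ sqn (A *ᵥ Function.extend f x 0) := by
    unfold sqn
    calc ∑ i', ((A *ᵥ Function.extend f x 0) (e i'))^2
        = ∑ i ∈ Finset.univ.image e, ((A *ᵥ Function.extend f x 0) i)^2 :=
          (Finset.sum_image (f := fun i => ((A *ᵥ Function.extend f x 0) i)^2) (g := e) (fun a _ b _ h => he h)).symm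
      _ ≤ ∑ i, ((A *ᵥ Function.extend f x 0) i)^2 := by
          apply Finset.sum_le_sum_of_subset_of_nonneg (Finset.subset_univ _)
          intro i _ _
          exact sq_nonneg _
  calc ∑ i', ((A *ᵥ Function.extend f x 0) (e i'))^2
      ≤ sqn (A *ᵥ Function.extend f x 0) := h2
    _ ≤ ‖A‖^2 * sqn (Function.extend f x 0) := sqn_mulVec_le A _
    _ = ‖A‖^2 * sqn x := by rw [sqn_ext hf]

lemma quad_submatrix_ge {f : n' → n} (hf : Function.Injective f) {A : Matrix n n ℝ} {c : ℝ}
    (h : ∀ x, c * sqn x ≤ x ⬝ᵥ A *ᵥ x) (x : n' → ℝ) :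
    c * sqn x ≤ x ⬝ᵥ (A.submatrix f f) *ᵥ x := by
  set xe := Function.extend f x 0 with hxe
  have h1 : x ⬝ᵥ (A.submatrix f f) *ᵥ x = xe ⬝ᵥ A *ᵥ xe := by
    show ∑ i', x i' * (A.submatrix f f *ᵥ x) i' = ∑ i, xe i * (A *ᵥ xe) i
    rw [sum_range_eq hf (fun i => xe i * (A *ᵥ xe) i)]
    · apply Finset.sum_congr rfl
      intro i' _
      rw [mulVec_submatrix hf, hxe, ext_apply hf]
    · intro j hj
      rw [hxe, ext_apply_zero x hj, zero_mul]
  rw [h1, ← sqn_ext hf x]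
  exact h xe

end Submatrix

section Frob
variable {n m : Type*} [Fintype n] [Fintype m] [DecidableEq n]

lemma frobNorm_nonneg (A : Matrix m n ℝ) : 0 ≤ frobNorm A := Real.sqrt_nonneg _

lemma frob_le_card_norm (A : Matrix m n ℝ) :
    frobNorm A ≤ Real.sqrt (Fintype.card n) * ‖A‖ := by
  have hcol : ∀ j, ∑ i, (A i j)^2 ≤ ‖A‖^2 := by
    intro j
    have h1 : A *ᵥ Pi.single j 1 = fun i => A i j := by
      funext i
      simp [Matrix.mulVec_single]
    have h2 := sqn_mulVec_le A (Pi.single j 1)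
    have h3 : sqn (Pi.single j (1:ℝ)) = 1 := by
      unfold sqn
      rw [Finset.sum_eq_single j]
      · simp
      · intro i _ hij; simp [Pi.single_apply, hij]
      · intro h; exact absurd (Finset.mem_univ j) h
    rw [h1, h3, mul_one] at h2
    exact h2
  have hsum : ∑ i, ∑ j, (A i j)^2 ≤ (Fintype.card n) * ‖A‖^2 := by
    rw [Finset.sum_comm]
    calc ∑ j, ∑ i, (A i j)^2 ≤ ∑ _j : n, ‖A‖^2 := Finset.sum_le_sum fun j _ => hcol j
      _ = (Fintype.card n) * ‖A‖^2 := by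
          rw [Finset.sum_const, Finset.card_univ, nsmul_eq_mul]
  unfold frobNorm
  calc Real.sqrt (∑ i, ∑ j, (A i j)^2) ≤ Real.sqrt ((Fintype.card n) * ‖A‖^2) :=
        Real.sqrt_le_sqrt hsum
    _ = Real.sqrt (Fintype.card n) * ‖A‖ := by
        rw [Real.sqrt_mul (by positivity), Real.sqrt_sq (norm_nonneg A)]

lemma sqrt_add_le (a b : ℝ) (ha : 0 ≤ a) (hb : 0 ≤ b) :
    Real.sqrt (a + b) ≤ Real.sqrt a + Real.sqrt b := by
  have h : a + b ≤ (Real.sqrt a + Real.sqrt b)^2 := by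
    have h1 : Real.sqrt a ^2 = a := Real.sq_sqrt ha
    have h2 : Real.sqrt b ^2 = b := Real.sq_sqrt hb
    nlinarith [Real.sqrt_nonneg a, Real.sqrt_nonneg b]
  calc Real.sqrt (a + b) ≤ Real.sqrt ((Real.sqrt a + Real.sqrt b)^2) := Real.sqrt_le_sqrt h
    _ = Real.sqrt a + Real.sqrt b := Real.sqrt_sq (by positivity)

lemma frob_fromBlocks {α β : Type*} [Fintype α] [Fintype β]
    (B : Matrix α β ℝ) (D : Matrix β β ℝ) :
    frobNorm (Matrix.fromBlocks (0 : Matrix α α ℝ) B (0 : Matrix β α ℝ) D) ≤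
      frobNorm B + frobNorm D := by
  unfold frobNorm
  have hsum : ∑ i : α ⊕ β, ∑ j : α ⊕ β,
      (Matrix.fromBlocks (0 : Matrix α α ℝ) B (0 : Matrix β α ℝ) D i j)^2 =
      (∑ i : α, ∑ j : β, (B i j)^2) + (∑ i : β, ∑ j : β, (D i j)^2) := by
    rw [Fintype.sum_sum_type]
    simp only [Fintype.sum_sum_type, Matrix.fromBlocks_apply₁₁, Matrix.fromBlocks_apply₁₂,
      Matrix.fromBlocks_apply₂₁, Matrix.fromBlocks_apply₂₂, Matrix.zero_apply]
    simp
  rw [hsum]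
  exact sqrt_add_le _ _ (by positivity) (by positivity)

lemma abs_quad_le_sqn {A : Matrix n n ℝ} (x : n → ℝ) :
    |x ⬝ᵥ A *ᵥ x| ≤ ‖A‖ * sqn x := by
  have := abs_quad_le A x x
  calc |x ⬝ᵥ A *ᵥ x| ≤ ‖A‖ * Real.sqrt (sqn x) * Real.sqrt (sqn x) := this
    _ = ‖A‖ * sqn x := by
        rw [mul_assoc, Real.mul_self_sqrt (sqn_nonneg x)]

lemma quad_smul_mat {A : Matrix n n ℝ} (c : ℝ) (x : n → ℝ) :
    x ⬝ᵥ (c • A) *ᵥ x = c * (x ⬝ᵥ A *ᵥ x) := by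
  rw [Matrix.smul_mulVec, dotProduct_smul, smul_eq_mul]

end Frob

section Coord
variable {n : Type*} [Fintype n] [DecidableEq n]

lemma star_eq_transpose (U : Matrix n n ℝ) : star U = Uᵀ := by
  ext i j
  simp [Matrix.star_eq_conjTranspose, Matrix.conjTranspose_apply]

lemma dot_mulVec_left (U : Matrix n n ℝ) (y z : n → ℝ) :
    y ⬝ᵥ (U *ᵥ z) = (Uᵀ *ᵥ y) ⬝ᵥ z := by
  rw [Matrix.dotProduct_mulVec, Matrix.mulVec_transpose]

lemma sqn_isometry {U : Matrix n n ℝ} (hU : star U * U = 1) (v : n → ℝ) :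
    sqn (U *ᵥ v) = sqn v := by
  have hUt : Uᵀ * U = 1 := by rw [← star_eq_transpose]; exact hU
  rw [← dot_self_eq_sqn (U *ᵥ v), dot_mulVec_left, Matrix.mulVec_mulVec, hUt,
    Matrix.one_mulVec, dot_self_eq_sqn]

lemma quad_le_sqn_mulVec {A U : Matrix n n ℝ} {μ : n → ℝ}
    (hU : star U * U = 1) (h1 : A = U * Matrix.diagonal μ * star U)
    {M : ℝ} (hM : 0 < M) (hμ : ∀ i, M⁻¹ ≤ μ i) (y : n → ℝ) :
    y ⬝ᵥ A *ᵥ y ≤ M * sqn (A *ᵥ y) := by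
  set w := star U *ᵥ y with hw
  have hAy : A *ᵥ y = U *ᵥ (Matrix.diagonal μ *ᵥ w) := by
    rw [h1, ← Matrix.mulVec_mulVec, ← Matrix.mulVec_mulVec]
  have e1 : y ⬝ᵥ A *ᵥ y = ∑ i, μ i * (w i)^2 := by
    rw [hAy, dot_mulVec_left, ← star_eq_transpose, ← hw]
    show ∑ i, w i * (Matrix.diagonal μ *ᵥ w) i = _
    apply Finset.sum_congr rfl
    intro i _
    rw [Matrix.mulVec_diagonal]
    ring
  have e2 : sqn (A *ᵥ y) = ∑ i, (μ i)^2 * (w i)^2 := by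
    rw [hAy, sqn_isometry hU]
    unfold sqn
    apply Finset.sum_congr rfl
    intro i _
    rw [Matrix.mulVec_diagonal]
    ring
  rw [e1, e2, Finset.mul_sum]
  apply Finset.sum_le_sum
  intro i _
  have hμpos : 0 < μ i := lt_of_lt_of_le (by positivity) (hμ i)
  have h2 : 1 ≤ M * μ i := by
    have h3 := hμ i
    rw [inv_le_iff_one_le_mul₀ hM] at h3
    linarith [h3]
  nlinarith [mul_nonneg (mul_nonneg (sub_nonneg.mpr h2) hμpos.le) (sq_nonneg (w i))]

lemma quad_single_diag (s : n → ℝ) (j : n) :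
    (Pi.single j 1 : n → ℝ) ⬝ᵥ (Matrix.diagonal s) *ᵥ (Pi.single j 1 : n → ℝ) = s j := by
  show ∑ i, (Pi.single j 1 : n → ℝ) i * (Matrix.diagonal s *ᵥ Pi.single j 1) i = s j
  rw [Finset.sum_eq_single j]
  · simp [Matrix.mulVec_diagonal]
  · intro i _ hij
    simp [Pi.single_apply, hij]
  · intro h; exact absurd (Finset.mem_univ j) h

lemma sqn_single (j : n) : sqn (Pi.single j 1 : n → ℝ) = 1 := by
  unfold sqn
  rw [Finset.sum_eq_single j]
  · simp
  · intro i _ hij; simp [Pi.single_apply, hij]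
  · intro h; exact absurd (Finset.mem_univ j) h

end Coord

/-- Frobenius-norm Lipschitz bound on `H^Ω(S) − I`, uniform over
small spectral perturbations of `Ω₀` and over sets `S` of size at most `K`. -/
theorem stmt_6 :
    ∀ M c₀ : ℝ, 1 ≤ M → 0 < c₀ →
      ∃ δ > (0 : ℝ), ∃ C > (0 : ℝ),
        ∀ (p : ℕ), 0 < p →
          ∀ (Om₀ : Matrix (Fin p) (Fin p) ℝ) (s : Fin p → ℝ),
            Om₀.IsSymm → Om₀.PosDef →
            M⁻¹ ≤ lambdaMin Om₀ → lambdaMax Om₀ ≤ M →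
            (∀ j, 0 ≤ s j) →
            (Om₀⁻¹ - (1 / 2 : ℝ) • Matrix.diagonal s).PosSemidef →
            c₀ ≤ lambdaMin
                ((2 : ℝ) • Matrix.diagonal s - Matrix.diagonal s * Om₀ * Matrix.diagonal s) →
            ∀ (K : ℕ), 1 ≤ K →
              ∀ S : Finset (Fin p), S.card ≤ K →
                ∀ Om : Matrix (Fin p) (Fin p) ℝ, Om.IsSymm → Om.PosDef →
                  specNorm (Om - Om₀) ≤ δ →
                  frobNorm (Hmat s Om₀ Om S - 1) ≤
                      C * Real.sqrt K * specNorm (Om - Om₀) ∧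
                    Hmat s Om₀ Om₀ S = 1 ∧
                    frobNorm (Hmat s Om₀ Om S - Hmat s Om₀ Om₀ S) ≤
                      C * Real.sqrt K * specNorm (Om - Om₀) := by
  intro M c₀ hM hc₀
  have hMpos : 0 < M := lt_of_lt_of_le one_pos hM
  refine ⟨c₀ / (8 * M^2), by positivity,
    2*M + (1 + 2*M^2) * (4*M^2/c₀) + 4*M^2/c₀ + 1, by positivity, ?_⟩
  intro p hp Om₀ s hOm₀symm hOm₀pd hlmin hlmax hsnn hsig hlamG K hK S hScard Om hOmsymm hOmpd hδspec
  have hOm₀s : Om₀ᵀ = Om₀ := hOm₀symm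
  have hOms : Omᵀ = Om := hOmsymm
  rw [specNorm_eq_norm] at hδspec
  rw [specNorm_eq_norm]
  have hΔnn : (0:ℝ) ≤ ‖Om - Om₀‖ := norm_nonneg _
  -- quadratic-form bounds for Om₀
  have hq₀lo : ∀ x, M⁻¹ * sqn x ≤ x ⬝ᵥ Om₀ *ᵥ x := rayleigh_ge_of_le_lambdaMin hlmin
  have hq₀hi : ∀ x, x ⬝ᵥ Om₀ *ᵥ x ≤ M * sqn x := rayleigh_le_of_lambdaMax_le hlmax
  have hermΩ : Om₀.IsHermitian := herm_of_symm hOm₀s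
  have heiglo : ∀ i, M⁻¹ ≤ hermΩ.eigenvalues i := eigen_ge hermΩ hq₀lo
  have heighi : ∀ i, hermΩ.eigenvalues i ≤ M := eigen_le hermΩ hq₀hi
  have hnormOm₀ : ‖Om₀‖ ≤ M := by
    apply norm_le_of_abs_eigen hOm₀s hMpos.le
    intro i
    rw [abs_le]
    have h1 := heiglo i
    have h2 : (0:ℝ) < M⁻¹ := by positivity
    exact ⟨by linarith, heighi i⟩
  -- s is bounded by 2M
  have hsub : ∀ j, s j ≤ 2*M := by
    intro j
    have hOminv : Om₀ * Om₀⁻¹ = 1 := pd_mul_inv_eq_one hOm₀pd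
    set e : Fin p → ℝ := Pi.single j 1 with he
    set y : Fin p → ℝ := Om₀⁻¹ *ᵥ e with hy
    have hOy : Om₀ *ᵥ y = e := by
      rw [hy, Matrix.mulVec_mulVec, hOminv, Matrix.one_mulVec]
    have hq : y ⬝ᵥ Om₀ *ᵥ y ≤ M * sqn (Om₀ *ᵥ y) :=
      quad_le_sqn_mulVec (star_mul_U hermΩ) (spectral_real hermΩ) hMpos heiglo y
    rw [hOy, sqn_single j, mul_one] at hq
    have h2 : e ⬝ᵥ Om₀⁻¹ *ᵥ e = y ⬝ᵥ Om₀ *ᵥ y := by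
      rw [hOy, ← hy]
      exact dotProduct_comm e y
    have h3 := quad_nonneg_of_psd hsig e
    rw [quad_sub, quad_smul_mat, quad_single_diag] at h3
    have h4 : e ⬝ᵥ Om₀⁻¹ *ᵥ e ≤ M := by rw [h2, hOy]; exact hq
    linarith
  have hnormD : ‖Matrix.diagonal s‖ ≤ 2*M :=
    norm_diagonal_le (by positivity)
      (fun j => by rw [abs_of_nonneg (hsnn j)]; exact hsub j)
  -- the G matrices
  set G₀ := (2:ℝ) • Matrix.diagonal s - Matrix.diagonal s * Om₀ * Matrix.diagonal s with hG₀
  set G := (2:ℝ) • Matrix.diagonal s - Matrix.diagonal s * Om * Matrix.diagonal s with hG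
  have hq_G₀ : ∀ x, c₀ * sqn x ≤ x ⬝ᵥ G₀ *ᵥ x := rayleigh_ge_of_le_lambdaMin hlamG
  have hGdiff : G₀ - G = Matrix.diagonal s * (Om - Om₀) * Matrix.diagonal s := by
    rw [hG₀, hG]
    noncomm_ring
  have hGdnorm : ‖G₀ - G‖ ≤ 4*M^2 * ‖Om - Om₀‖ := by
    rw [hGdiff]
    calc ‖Matrix.diagonal s * (Om - Om₀) * Matrix.diagonal s‖
        ≤ ‖Matrix.diagonal s * (Om - Om₀)‖ * ‖Matrix.diagonal s‖ := Matrix.l2_opNorm_mul _ _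
      _ ≤ (‖Matrix.diagonal s‖ * ‖Om - Om₀‖) * ‖Matrix.diagonal s‖ := by
          apply mul_le_mul_of_nonneg_right (Matrix.l2_opNorm_mul _ _) (norm_nonneg _)
      _ ≤ ((2*M) * ‖Om - Om₀‖) * (2*M) := by
          apply mul_le_mul (mul_le_mul_of_nonneg_right hnormD hΔnn) hnormD (norm_nonneg _)
            (by positivity)
      _ = 4*M^2 * ‖Om - Om₀‖ := by ring
  have hGsmall : ‖G₀ - G‖ ≤ c₀/2 := by
    have h1 : 4*M^2 * ‖Om - Om₀‖ ≤ 4*M^2 * (c₀/(8*M^2)) := by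
      apply mul_le_mul_of_nonneg_left hδspec (by positivity)
    have h2 : 4*M^2 * (c₀/(8*M^2)) = c₀/2 := by field_simp; ring
    linarith [hGdnorm]
  have hq_G : ∀ x, (c₀/2) * sqn x ≤ x ⬝ᵥ G *ᵥ x := by
    intro x
    have h1 := hq_G₀ x
    have h2 : |x ⬝ᵥ (G₀ - G) *ᵥ x| ≤ (c₀/2) * sqn x :=
      (abs_quad_le_sqn x).trans (mul_le_mul_of_nonneg_right hGsmall (sqn_nonneg x))
    rw [quad_sub] at h2
    have h3 := abs_le.mp h2
    linarith [h3.2]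
  have hGs : Gᵀ = G := by
    rw [hG]
    simp [Matrix.transpose_sub, Matrix.transpose_smul, Matrix.transpose_mul,
      Matrix.diagonal_transpose, hOms, Matrix.mul_assoc]
  have hG₀s : G₀ᵀ = G₀ := by
    rw [hG₀]
    simp [Matrix.transpose_sub, Matrix.transpose_smul, Matrix.transpose_mul,
      Matrix.diagonal_transpose, hOm₀s, Matrix.mul_assoc]
  have hGpsd : G.PosSemidef := psd_of_quad (herm_of_symm hGs)
    (fun x => le_trans (mul_nonneg (by positivity) (sqn_nonneg x)) (hq_G x))
  have hG₀psd : G₀.PosSemidef := psd_of_quad (herm_of_symm hG₀s)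
    (fun x => le_trans (mul_nonneg hc₀.le (sqn_nonneg x)) (hq_G₀ x))
  -- Bmat identities
  have hBOm : Bmat s Om = msqrt G := by rw [hG]; rfl
  have hBOm₀ : Bmat s Om₀ = msqrt G₀ := by rw [hG₀]; rfl
  -- submatrix machinery
  have hιinj : Function.Injective (fun j : {j // j ∈ S} => (j : Fin p)) :=
    Subtype.coe_injective
  set Am := (colSub (Bmat s Om) S)ᵀ * colSub (Bmat s Om) S with hAm
  set A₀m := (colSub (Bmat s Om₀) S)ᵀ * colSub (Bmat s Om₀) S with hA₀m
  have hAeq : Am = G.submatrix (fun j : {j // j ∈ S} => (j : Fin p))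
      (fun j : {j // j ∈ S} => (j : Fin p)) := by
    rw [hAm, hBOm]
    have hcs : colSub (msqrt G) S =
        (msqrt G).submatrix id (fun j : {j // j ∈ S} => (j : Fin p)) := rfl
    rw [hcs, Matrix.transpose_submatrix, symm_of_herm (msqrt_psd hGpsd).1,
      ← Matrix.submatrix_mul (msqrt G) (msqrt G) _ id _ Function.bijective_id,
      msqrt_mul_self hGpsd]
  have hA₀eq : A₀m = G₀.submatrix (fun j : {j // j ∈ S} => (j : Fin p))
      (fun j : {j // j ∈ S} => (j : Fin p)) := by
    rw [hA₀m, hBOm₀]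
    have hcs : colSub (msqrt G₀) S =
        (msqrt G₀).submatrix id (fun j : {j // j ∈ S} => (j : Fin p)) := rfl
    rw [hcs, Matrix.transpose_submatrix, symm_of_herm (msqrt_psd hG₀psd).1,
      ← Matrix.submatrix_mul (msqrt G₀) (msqrt G₀) _ id _ Function.bijective_id,
      msqrt_mul_self hG₀psd]
  have hqAm : ∀ x, (c₀/2) * sqn x ≤ x ⬝ᵥ Am *ᵥ x := by
    intro x
    rw [hAeq]
    exact quad_submatrix_ge hιinj hq_G x
  have hqA₀m : ∀ x, c₀ * sqn x ≤ x ⬝ᵥ A₀m *ᵥ x := by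
    intro x
    rw [hA₀eq]
    exact quad_submatrix_ge hιinj hq_G₀ x
  have hAms : Amᵀ = Am := by
    rw [hAeq, Matrix.transpose_submatrix, hGs]
  have hA₀ms : A₀mᵀ = A₀m := by
    rw [hA₀eq, Matrix.transpose_submatrix, hG₀s]
  have hAmpsd : Am.PosSemidef := psd_of_quad (herm_of_symm hAms)
    (fun x => le_trans (mul_nonneg (by positivity) (sqn_nonneg x)) (hqAm x))
  have hA₀mpsd : A₀m.PosSemidef := psd_of_quad (herm_of_symm hA₀ms)
    (fun x => le_trans (mul_nonneg hc₀.le (sqn_nonneg x)) (hqA₀m x))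
  -- square roots
  have hqR' : ∀ x, Real.sqrt (c₀/2) * sqn x ≤ x ⬝ᵥ (msqrt Am) *ᵥ x :=
    quad_msqrt_ge hAmpsd (by positivity) hqAm
  have hqR : ∀ x, Real.sqrt c₀ * sqn x ≤ x ⬝ᵥ (msqrt A₀m) *ᵥ x :=
    quad_msqrt_ge hA₀mpsd hc₀.le hqA₀m
  have hsqrtc₀pos : 0 < Real.sqrt c₀ := Real.sqrt_pos.mpr hc₀
  have hRsym : (msqrt A₀m)ᵀ = msqrt A₀m := symm_of_herm (msqrt_psd hA₀mpsd).1
  have hRpd : (msqrt A₀m).PosDef := posdef_of_quad hRsym hsqrtc₀pos hqR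
  have hRnorminv : ‖(msqrt A₀m)⁻¹‖ ≤ 1 / Real.sqrt c₀ := norm_inv_le hRsym hsqrtc₀pos hqR
  have hRinvR : (msqrt A₀m)⁻¹ * msqrt A₀m = 1 :=
    Matrix.nonsing_inv_mul _ (isUnit_iff_ne_zero.mpr hRpd.det_pos.ne')
  have hBt : Btilde s Om₀ Om S = (msqrt A₀m)⁻¹ * msqrt Am := by
    rw [hA₀m, hAm]; rfl
  have hBt₀ : Btilde s Om₀ Om₀ S = 1 := by
    have h1 : Btilde s Om₀ Om₀ S = (msqrt A₀m)⁻¹ * msqrt A₀m := by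
      rw [hA₀m]; rfl
    rw [h1, hRinvR]
  -- sqrt Lipschitz bound
  have hALip : ‖msqrt Am - msqrt A₀m‖ ≤
      ‖Am - A₀m‖ / (Real.sqrt (c₀/2) + Real.sqrt c₀) :=
    sqrt_lip hAmpsd hA₀mpsd (Real.sqrt_nonneg _) (Real.sqrt_nonneg _)
      (by linarith [Real.sqrt_nonneg (c₀/2)]) hqR' hqR
  have hAmdiff : Am - A₀m = (G - G₀).submatrix (fun j : {j // j ∈ S} => (j : Fin p))
      (fun j : {j // j ∈ S} => (j : Fin p)) := by
    rw [hAeq, hA₀eq]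
    ext i j
    simp [Matrix.submatrix_apply, Matrix.sub_apply]
  have hAmdnorm : ‖Am - A₀m‖ ≤ 4*M^2*‖Om - Om₀‖ := by
    rw [hAmdiff]
    refine le_trans (norm_submatrix_le hιinj hιinj _) ?_
    calc ‖G - G₀‖ = ‖G₀ - G‖ := norm_sub_rev _ _
      _ ≤ 4*M^2*‖Om - Om₀‖ := hGdnorm
  have hBtnorm : ‖Btilde s Om₀ Om S - 1‖ ≤ 4*M^2/c₀ * ‖Om - Om₀‖ := by
    rw [hBt]
    have h1 : (msqrt A₀m)⁻¹ * msqrt Am - 1 = (msqrt A₀m)⁻¹ * (msqrt Am - msqrt A₀m) := by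
      rw [Matrix.mul_sub, hRinvR]
    rw [h1]
    have hsqc : Real.sqrt c₀ * Real.sqrt c₀ = c₀ := Real.mul_self_sqrt hc₀.le
    calc ‖(msqrt A₀m)⁻¹ * (msqrt Am - msqrt A₀m)‖
        ≤ ‖(msqrt A₀m)⁻¹‖ * ‖msqrt Am - msqrt A₀m‖ := Matrix.l2_opNorm_mul _ _
      _ ≤ (1/Real.sqrt c₀) * (‖Am - A₀m‖ / (Real.sqrt (c₀/2) + Real.sqrt c₀)) := by
          apply mul_le_mul hRnorminv hALip (norm_nonneg _) (by positivity)
      _ ≤ (1/Real.sqrt c₀) * ((4*M^2*‖Om - Om₀‖) / Real.sqrt c₀) := by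
          apply mul_le_mul_of_nonneg_left _ (by positivity)
          apply div_le_div₀ (mul_nonneg (by positivity) hΔnn) hAmdnorm hsqrtc₀pos
            (le_add_of_nonneg_left (Real.sqrt_nonneg _))
      _ = 4*M^2/c₀ * ‖Om - Om₀‖ := by
          rw [← hsqc]
          field_simp
          rw [Real.sqrt_sq hsqrtc₀pos.le]
  -- C matrices
  have hCdiff : Cmat s Om - Cmat s Om₀ = -((Om - Om₀) * Matrix.diagonal s) := by
    unfold Cmat
    noncomm_ring
  have hCnorm : ‖Cmat s Om - Cmat s Om₀‖ ≤ 2*M*‖Om - Om₀‖ := by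
    rw [hCdiff, norm_neg]
    calc ‖(Om - Om₀) * Matrix.diagonal s‖ ≤ ‖Om - Om₀‖ * ‖Matrix.diagonal s‖ :=
          Matrix.l2_opNorm_mul _ _
      _ ≤ ‖Om - Om₀‖ * (2*M) := mul_le_mul_of_nonneg_left hnormD hΔnn
      _ = 2*M*‖Om - Om₀‖ := by ring
  have honenorm : ‖(1 : Matrix (Fin p) (Fin p) ℝ)‖ ≤ 1 := by
    apply norm_le_of_sqn _ zero_le_one
    intro x
    rw [Matrix.one_mulVec, one_pow, one_mul]
  have hC₀norm : ‖Cmat s Om₀‖ ≤ 1 + 2*M^2 := by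
    unfold Cmat
    calc ‖(1 : Matrix (Fin p) (Fin p) ℝ) - Om₀ * Matrix.diagonal s‖
        ≤ ‖(1 : Matrix (Fin p) (Fin p) ℝ)‖ + ‖Om₀ * Matrix.diagonal s‖ := norm_sub_le _ _
      _ ≤ 1 + ‖Om₀‖ * ‖Matrix.diagonal s‖ := add_le_add honenorm (Matrix.l2_opNorm_mul _ _)
      _ ≤ 1 + M * (2*M) := by
          have := mul_le_mul hnormOm₀ hnormD (norm_nonneg _) hMpos.le
          linarith
      _ = 1 + 2*M^2 := by ring
  -- top-right block
  set T := colSub (Cmat s Om) S - colSub (Cmat s Om₀) S * Btilde s Om₀ Om S with hT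
  have hTsplit : T = colSub (Cmat s Om - Cmat s Om₀) S +
      colSub (Cmat s Om₀) S * (1 - Btilde s Om₀ Om S) := by
    rw [hT]
    have hcs : colSub (Cmat s Om - Cmat s Om₀) S =
        colSub (Cmat s Om) S - colSub (Cmat s Om₀) S := by
      ext i j
      simp [colSub, Matrix.sub_apply]
    rw [hcs, Matrix.mul_sub, Matrix.mul_one]
    abel
  have hTnorm : ‖T‖ ≤ 2*M*‖Om - Om₀‖ + (1+2*M^2)*(4*M^2/c₀*‖Om - Om₀‖) := by
    rw [hTsplit]
    have hb1 : ‖colSub (Cmat s Om - Cmat s Om₀) S‖ ≤ 2*M*‖Om - Om₀‖ := by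
      refine le_trans (norm_submatrix_le (fun a b h => h) hιinj _) hCnorm
    have hb2 : ‖colSub (Cmat s Om₀) S * (1 - Btilde s Om₀ Om S)‖ ≤
        (1+2*M^2)*(4*M^2/c₀*‖Om - Om₀‖) := by
      calc ‖colSub (Cmat s Om₀) S * (1 - Btilde s Om₀ Om S)‖
          ≤ ‖colSub (Cmat s Om₀) S‖ * ‖1 - Btilde s Om₀ Om S‖ := Matrix.l2_opNorm_mul _ _
        _ ≤ (1+2*M^2) * (4*M^2/c₀*‖Om - Om₀‖) := by
            apply mul_le_mul
            · exact le_trans (norm_submatrix_le (fun a b h => h) hιinj _) hC₀norm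
            · rw [norm_sub_rev]
              exact hBtnorm
            · exact norm_nonneg _
            · positivity
    calc ‖colSub (Cmat s Om - Cmat s Om₀) S +
          colSub (Cmat s Om₀) S * (1 - Btilde s Om₀ Om S)‖
        ≤ ‖colSub (Cmat s Om - Cmat s Om₀) S‖ +
          ‖colSub (Cmat s Om₀) S * (1 - Btilde s Om₀ Om S)‖ := norm_add_le _ _
      _ ≤ 2*M*‖Om - Om₀‖ + (1+2*M^2)*(4*M^2/c₀*‖Om - Om₀‖) := add_le_add hb1 hb2
  -- block decomposition
  have hblock : Hmat s Om₀ Om S - 1 =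
      Matrix.fromBlocks 0 T 0 (Btilde s Om₀ Om S - 1) := by
    unfold Hmat
    rw [← Matrix.fromBlocks_one, hT]
    ext (i | i) (j | j) <;>
      simp [Matrix.fromBlocks, Matrix.sub_apply]
  -- H at Om₀ is the identity
  have hH₀ : Hmat s Om₀ Om₀ S = 1 := by
    unfold Hmat
    rw [hBt₀, Matrix.mul_one, sub_self]
    exact Matrix.fromBlocks_one
  -- cardinality
  have hcard : Real.sqrt (Fintype.card {j // j ∈ S}) ≤ Real.sqrt K := by
    apply Real.sqrt_le_sqrt
    rw [Fintype.card_coe]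
    exact_mod_cast hScard
  have hKnn : (0:ℝ) ≤ Real.sqrt K := Real.sqrt_nonneg _
  -- final Frobenius bound
  have hmain : frobNorm (Hmat s Om₀ Om S - 1) ≤
      (2*M + (1 + 2*M^2) * (4*M^2/c₀) + 4*M^2/c₀ + 1) * Real.sqrt K * ‖Om - Om₀‖ := by
    rw [hblock]
    have h1 := frob_fromBlocks T (Btilde s Om₀ Om S - 1)
    have h2 : frobNorm T ≤ Real.sqrt K * ‖T‖ :=
      le_trans (frob_le_card_norm T) (mul_le_mul_of_nonneg_right hcard (norm_nonneg _))
    have h3 : frobNorm (Btilde s Om₀ Om S - 1) ≤ Real.sqrt K * ‖Btilde s Om₀ Om S - 1‖ :=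
      le_trans (frob_le_card_norm _) (mul_le_mul_of_nonneg_right hcard (norm_nonneg _))
    have h4 : ‖T‖ + ‖Btilde s Om₀ Om S - 1‖ ≤
        (2*M + (1 + 2*M^2) * (4*M^2/c₀) + 4*M^2/c₀) * ‖Om - Om₀‖ := by
      have := add_le_add hTnorm hBtnorm
      calc ‖T‖ + ‖Btilde s Om₀ Om S - 1‖
          ≤ (2*M*‖Om - Om₀‖ + (1+2*M^2)*(4*M^2/c₀*‖Om - Om₀‖)) + 4*M^2/c₀ * ‖Om - Om₀‖ := this
        _ = (2*M + (1 + 2*M^2) * (4*M^2/c₀) + 4*M^2/c₀) * ‖Om - Om₀‖ := by ring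
    calc frobNorm (Matrix.fromBlocks 0 T 0 (Btilde s Om₀ Om S - 1))
        ≤ frobNorm T + frobNorm (Btilde s Om₀ Om S - 1) := h1
      _ ≤ Real.sqrt K * ‖T‖ + Real.sqrt K * ‖Btilde s Om₀ Om S - 1‖ := add_le_add h2 h3
      _ = Real.sqrt K * (‖T‖ + ‖Btilde s Om₀ Om S - 1‖) := by ring
      _ ≤ Real.sqrt K * ((2*M + (1 + 2*M^2) * (4*M^2/c₀) + 4*M^2/c₀) * ‖Om - Om₀‖) :=
          mul_le_mul_of_nonneg_left h4 hKnn
      _ ≤ (2*M + (1 + 2*M^2) * (4*M^2/c₀) + 4*M^2/c₀ + 1) * Real.sqrt K * ‖Om - Om₀‖ := by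
          have hmul : (0:ℝ) ≤ Real.sqrt K * ‖Om - Om₀‖ := mul_nonneg hKnn hΔnn
          nlinarith [hmul]
  refine ⟨hmain, hH₀, ?_⟩
  rw [hH₀]
  exact hmain

end
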